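/- Let A = (1 a₂ ⋯ aₙ) with 1 < a₂ < ⋯ < aₙ and let ω ∈ ℝⁿ_{>0} satisfy: ωᵢ > aᵢ ω₁ for 2 ≤ i ≤ n−2 and for i = n, and a_{n−1} ω₁ > ω_{n−1}. Then the initial ideal of I_A with respect to ω equals ⟨ ∂₂, …, ∂_{n−2}, ∂₁^{a_{n−1}}, ∂ₙ ⟩, where in_ω of a polynomial is the sum of its terms of maximal ω-weight and in_ω(I_A) = ⟨ in_ω(f) : f ∈ I_A ⟩. -/

import Mathlib

open MvPolynomial

noncomputable def wdeg {n : ℕ} (ω : Fin n → ℝ) (γ : Fin n →₀ ℕ) : ℝ :=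
  ∑ i, ω i * (γ i : ℝ)

noncomputable def inw {n : ℕ} (ω : Fin n → ℝ) (f : MvPolynomial (Fin n) ℂ) :
    MvPolynomial (Fin n) ℂ :=
  ∑ γ ∈ f.support.filter (fun γ => ∀ δ ∈ f.support, wdeg ω δ ≤ wdeg ω γ),
    monomial γ (coeff γ f)

namespace Stmt14Aux

/-- A-degree of a monomial exponent. -/
def Adeg {m : ℕ} (a : Fin m → ℕ) (γ : Fin m →₀ ℕ) : ℕ := ∑ i, a i * γ i

lemma sum_eq_pair {α M : Type*} [Fintype α] [DecidableEq α] [AddCommMonoid M] (g : α → M)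
    (i j : α) (hij : i ≠ j) (h : ∀ k, k ≠ i → k ≠ j → g k = 0) :
    ∑ k, g k = g i + g j := by
  rw [← Finset.sum_pair hij]
  refine (Finset.sum_subset (Finset.subset_univ _) ?_).symm
  intro x _ hx
  simp only [Finset.mem_insert, Finset.mem_singleton] at hx
  push_neg at hx
  exact h x hx.1 hx.2

lemma wdeg_single {m : ℕ} (ω : Fin m → ℝ) (i : Fin m) (k : ℕ) :
    wdeg ω (Finsupp.single i k) = ω i * k := by
  unfold wdeg
  rw [Finset.sum_eq_single i]
  · simp
  · intro j _ hj
    rw [Finsupp.single_eq_of_ne' (Ne.symm hj)]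
    simp
  · simp

lemma phi_monomial {m : ℕ} (a : Fin m → ℕ) (γ : Fin m →₀ ℕ) (c : ℂ) :
    aeval (fun i => (Polynomial.X : Polynomial ℂ) ^ a i) (monomial γ c)
      = Polynomial.C c * Polynomial.X ^ Adeg a γ := by
  rw [aeval_monomial]
  congr 1
  rw [Finsupp.prod]
  simp_rw [← pow_mul]
  rw [Finset.prod_pow_eq_pow_sum]
  congr 1
  refine Finset.sum_subset (Finset.subset_univ _) ?_
  intro i _ hi
  rw [Finsupp.notMem_support_iff.mp hi, mul_zero]

lemma coeff_phi {m : ℕ} (a : Fin m → ℕ) (f : MvPolynomial (Fin m) ℂ) (d : ℕ) :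
    (aeval (fun i => (Polynomial.X : Polynomial ℂ) ^ a i) f).coeff d
      = ∑ γ ∈ f.support.filter (fun γ => Adeg a γ = d), coeff γ f := by
  conv_lhs => rw [f.as_sum]
  rw [map_sum, Polynomial.finset_sum_coeff]
  rw [Finset.sum_filter]
  apply Finset.sum_congr rfl
  intro γ _
  rw [phi_monomial, Polynomial.coeff_C_mul, Polynomial.coeff_X_pow]
  by_cases h : Adeg a γ = d
  · simp [h]
  · rw [if_neg (fun hd => h hd.symm), mul_zero, if_neg h]

lemma phi_eq_zero {m : ℕ} (a : Fin m → ℕ) {f : MvPolynomial (Fin m) ℂ}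
    (hf : f ∈ Ideal.span {f : MvPolynomial (Fin m) ℂ | ∃ u : Fin m → ℤ,
        (∑ i, (a i : ℤ) * u i = 0) ∧
        f = (∏ i, X i ^ (u i).toNat) - ∏ i, X i ^ (-u i).toNat}) :
    aeval (fun i => (Polynomial.X : Polynomial ℂ) ^ a i) f = 0 := by
  have hle : Ideal.span {f : MvPolynomial (Fin m) ℂ | ∃ u : Fin m → ℤ,
        (∑ i, (a i : ℤ) * u i = 0) ∧
        f = (∏ i, X i ^ (u i).toNat) - ∏ i, X i ^ (-u i).toNat}
      ≤ RingHom.ker (aeval (fun i => (Polynomial.X : Polynomial ℂ) ^ a i)).toRingHom := by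
    rw [Ideal.span_le]
    rintro g ⟨u, hu, rfl⟩
    have key : ∑ i, a i * (u i).toNat = ∑ i, a i * (-u i).toNat := by
      have h2 : ((∑ i, a i * (u i).toNat : ℕ) : ℤ) = ((∑ i, a i * (-u i).toNat : ℕ) : ℤ) := by
        push_cast
        rw [← sub_eq_zero, ← Finset.sum_sub_distrib, ← hu]
        apply Finset.sum_congr rfl
        intro i _
        rw [← mul_sub]
        congr 1
        omega
      exact_mod_cast h2
    simp only [SetLike.mem_coe, RingHom.mem_ker, AlgHom.toRingHom_eq_coe, RingHom.coe_coe,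
      map_sub, map_prod, map_pow, aeval_X]
    simp_rw [← pow_mul, Finset.prod_pow_eq_pow_sum, key, sub_self]
  exact hle hf

lemma wdeg_lt {n : ℕ} (a : Fin (n+3) → ℕ) (h0 : a 0 = 1)
    (ω : Fin (n+3) → ℝ) (p : Fin (n+3)) (hp : (0:Fin (n+3)) ≠ p)
    (hw0 : 0 < ω 0)
    (hω1 : ∀ i, i ≠ 0 → i ≠ p → (a i : ℝ) * ω 0 < ω i)
    (hω2 : ω p < (a p : ℝ) * ω 0)
    (γ δ : Fin (n+3) →₀ ℕ)
    (hγ : ∀ i, i ≠ 0 → i ≠ p → γ i = 0) (hγ0 : γ 0 < a p)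
    (hA : Adeg a δ = Adeg a γ) (hne : δ ≠ γ) :
    wdeg ω γ < wdeg ω δ := by
  have hd : Adeg a γ = γ 0 + a p * γ p := by
    unfold Adeg
    rw [sum_eq_pair (fun i => a i * γ i) 0 p hp
      (fun k hk1 hk2 => by show a k * γ k = 0; rw [hγ k hk1 hk2, mul_zero]), h0, one_mul]
  have hwγ : wdeg ω γ = ω 0 * γ 0 + ω p * γ p := by
    unfold wdeg
    rw [sum_eq_pair (fun i => ω i * (γ i:ℝ)) 0 p hp
      (fun k hk1 hk2 => by show ω k * ((γ k : ℕ) : ℝ) = 0; rw [hγ k hk1 hk2]; simp)]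
  have hsplitw : wdeg ω δ = (∑ i ∈ Finset.univ.erase p, ω i * (δ i : ℝ)) + ω p * δ p :=
    (Finset.sum_erase_add _ _ (Finset.mem_univ p)).symm
  have hsplitA : (∑ i ∈ Finset.univ.erase p, (a i : ℝ) * (δ i : ℝ)) + (a p : ℝ) * δ p
      = (Adeg a γ : ℝ) := by
    rw [← hA]
    unfold Adeg
    push_cast
    exact Finset.sum_erase_add _ _ (Finset.mem_univ p)
  have hbound : ∀ i ∈ Finset.univ.erase p, ω 0 * ((a i:ℝ) * δ i) ≤ ω i * δ i := by
    intro i hi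
    have hip : i ≠ p := (Finset.mem_erase.mp hi).1
    by_cases hi0 : i = 0
    · subst hi0; rw [h0]; push_cast; ring_nf; exact le_refl _
    · have h1 := le_of_lt (hω1 i hi0 hip)
      have h2 : (0:ℝ) ≤ (δ i : ℝ) := Nat.cast_nonneg _
      nlinarith
  have hpA : a p * δ p ≤ Adeg a δ := by
    unfold Adeg
    exact Finset.single_le_sum (f := fun i => a i * δ i) (fun i _ => Nat.zero_le _)
      (Finset.mem_univ p)
  have hδp_le : δ p ≤ γ p := by
    rw [hA, hd] at hpA
    by_contra hlt
    push_neg at hlt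
    have h3 : a p * (γ p + 1) ≤ a p * δ p := Nat.mul_le_mul_left (a p) hlt
    rw [Nat.mul_add, Nat.mul_one] at h3
    omega
  have hγ0' : (γ 0 : ℝ) = (Adeg a γ : ℝ) - (a p:ℝ) * γ p := by rw [hd]; push_cast; ring
  rcases eq_or_lt_of_le hδp_le with heq | hlt
  · have hex : ∃ j, j ≠ 0 ∧ j ≠ p ∧ δ j ≠ 0 := by
      by_contra hno
      push_neg at hno
      apply hne
      have hdδ : Adeg a δ = δ 0 + a p * δ p := by
        unfold Adeg
        rw [sum_eq_pair (fun i => a i * δ i) 0 p hp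
          (fun k hk1 hk2 => by show a k * δ k = 0; rw [hno k hk1 hk2, mul_zero]), h0, one_mul]
      rw [hdδ, hd, heq] at hA
      have h00 : δ 0 = γ 0 := by omega
      ext i
      by_cases hi0 : i = 0
      · subst hi0; exact h00
      by_cases hip : i = p
      · subst hip; exact heq
      rw [hno i hi0 hip, hγ i hi0 hip]
    obtain ⟨j, hj0, hjp, hjδ⟩ := hex
    have hstrict : ω 0 * (∑ i ∈ Finset.univ.erase p, (a i:ℝ) * (δ i:ℝ))
        < ∑ i ∈ Finset.univ.erase p, ω i * (δ i:ℝ) := by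
      rw [Finset.mul_sum]
      apply Finset.sum_lt_sum hbound
      refine ⟨j, Finset.mem_erase.mpr ⟨hjp, Finset.mem_univ j⟩, ?_⟩
      have h1 := hω1 j hj0 hjp
      have h2 : (1:ℝ) ≤ (δ j : ℝ) := by exact_mod_cast Nat.one_le_iff_ne_zero.mpr hjδ
      nlinarith
    have heq' : (δ p : ℝ) = (γ p : ℝ) := by exact_mod_cast congrArg Nat.cast heq
    rw [heq'] at hsplitA
    rw [hwγ, hsplitw, heq']
    have hSa : (∑ i ∈ Finset.univ.erase p, (a i:ℝ) * (δ i:ℝ)) = (γ 0 : ℝ) := by linarith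
    rw [hSa] at hstrict
    linarith
  · have hweak : ω 0 * (∑ i ∈ Finset.univ.erase p, (a i:ℝ) * (δ i:ℝ))
        ≤ ∑ i ∈ Finset.univ.erase p, ω i * (δ i:ℝ) := by
      rw [Finset.mul_sum]
      exact Finset.sum_le_sum hbound
    have h1 : (δ p:ℝ) < (γ p:ℝ) := by exact_mod_cast hlt
    have h2 : (0:ℝ) < (a p:ℝ) * ω 0 - ω p := by linarith
    have hSa : (∑ i ∈ Finset.univ.erase p, (a i:ℝ) * (δ i:ℝ))
        = (Adeg a γ : ℝ) - (a p:ℝ) * (δ p:ℝ) := by linarith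
    rw [hSa] at hweak
    rw [hwγ, hsplitw, hγ0']
    nlinarith [mul_pos h2 (sub_pos.mpr h1)]



lemma support_binomial {m : ℕ} {s t : Fin m →₀ ℕ} (h : s ≠ t) {c d : ℂ}
    (hc : c ≠ 0) (hd : d ≠ 0) :
    (monomial s c + monomial t d).support = {s, t} := by
  apply Finset.ext
  intro γ
  rw [mem_support_iff, coeff_add, coeff_monomial, coeff_monomial]
  simp only [Finset.mem_insert, Finset.mem_singleton]
  by_cases h1 : s = γ <;> by_cases h2 : t = γ
  · exact absurd (h1.trans h2.symm) h
  · simp [h1, h2, hc, eq_comm]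
  · simp [h1, h2, hd, eq_comm]
  · simp [h1, h2, eq_comm]

lemma coeff_binomial_left {m : ℕ} {s t : Fin m →₀ ℕ} (h : s ≠ t) (c d : ℂ) :
    coeff s (monomial s c + monomial t d) = c := by
  rw [coeff_add, coeff_monomial, if_pos rfl, coeff_monomial, if_neg (Ne.symm h), add_zero]

lemma inw_binomial {m : ℕ} (ω : Fin m → ℝ) {s t : Fin m →₀ ℕ} (hst : s ≠ t)
    (hw : wdeg ω t < wdeg ω s) {c d : ℂ} (hc : c ≠ 0) (hd : d ≠ 0) :
    inw ω (monomial s c + monomial t d) = monomial s c := by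
  unfold inw
  have hsup := support_binomial hst hc hd
  have hfilter : (monomial s c + monomial t d).support.filter
      (fun γ => ∀ δ ∈ (monomial s c + monomial t d).support, wdeg ω δ ≤ wdeg ω γ) = {s} := by
    rw [hsup]
    apply Finset.ext
    intro γ
    simp only [Finset.mem_filter, Finset.mem_insert, Finset.mem_singleton]
    constructor
    · rintro ⟨hγ | hγ, hall⟩
      · exact hγ
      · subst hγ
        exact absurd (hall s (Or.inl rfl)) (not_le.mpr hw)
    · intro hγ
      subst hγ
      refine ⟨Or.inl rfl, fun δ hδ => ?_⟩
      rcases hδ with hδ | hδ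
      · subst hδ; exact le_refl _
      · subst hδ; exact le_of_lt hw
  rw [hfilter, Finset.sum_singleton, coeff_binomial_left hst]

lemma binomial_ne_zero {m : ℕ} {s t : Fin m →₀ ℕ} (hst : s ≠ t) {c d : ℂ}
    (hd : d ≠ 0) : monomial s c + monomial t d ≠ 0 := by
  intro h
  have : coeff t (monomial s c + monomial t d) = d := by
    rw [add_comm, coeff_binomial_left (Ne.symm hst)]
  rw [h, coeff_zero] at this
  exact hd this.symm

lemma max_support {n : ℕ} (a : Fin (n+3) → ℕ) (h0 : a 0 = 1)
    (ω : Fin (n+3) → ℝ) (p : Fin (n+3)) (hp : (0:Fin (n+3)) ≠ p)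
    (hw0 : 0 < ω 0)
    (hω1 : ∀ i, i ≠ 0 → i ≠ p → (a i : ℝ) * ω 0 < ω i)
    (hω2 : ω p < (a p : ℝ) * ω 0)
    {f : MvPolynomial (Fin (n+3)) ℂ}
    (hf : f ∈ Ideal.span {f : MvPolynomial (Fin (n+3)) ℂ | ∃ u : Fin (n+3) → ℤ,
        (∑ i, (a i : ℤ) * u i = 0) ∧
        f = (∏ i, X i ^ (u i).toNat) - ∏ i, X i ^ (-u i).toNat})
    {γ : Fin (n+3) →₀ ℕ} (hγs : γ ∈ f.support)
    (hmax : ∀ δ ∈ f.support, wdeg ω δ ≤ wdeg ω γ) :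
    a p ≤ γ 0 ∨ ∃ i, i ≠ 0 ∧ i ≠ p ∧ γ i ≠ 0 := by
  by_contra hcon
  push_neg at hcon
  obtain ⟨h1, h2⟩ := hcon
  have h1' : γ 0 < a p := h1
  have hphi := phi_eq_zero a hf
  have hc := coeff_phi a f (Adeg a γ)
  rw [hphi, Polynomial.coeff_zero] at hc
  have hγf : γ ∈ f.support.filter (fun γ' => Adeg a γ' = Adeg a γ) :=
    Finset.mem_filter.mpr ⟨hγs, rfl⟩
  by_cases hone : ∀ δ ∈ f.support.filter (fun γ' => Adeg a γ' = Adeg a γ), δ = γ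
  · have hsum : ∑ δ ∈ f.support.filter (fun γ' => Adeg a γ' = Adeg a γ), coeff δ f
        = coeff γ f :=
      Finset.sum_eq_single_of_mem γ hγf (fun b hb hbne => absurd (hone b hb) hbne)
    rw [hsum] at hc
    exact (mem_support_iff.mp hγs) hc.symm
  · push_neg at hone
    obtain ⟨δ, hδmem, hδne⟩ := hone
    obtain ⟨hδs, hδA⟩ := Finset.mem_filter.mp hδmem
    have hlt := wdeg_lt a h0 ω p hp hw0 hω1 hω2 γ δ h2 h1' hδA hδne
    exact absurd (hmax δ hδs) (not_le.mpr hlt)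

end Stmt14Aux


open Stmt14Aux in
/-- For `A = (1 a₂ ⋯ aₙ)` (coordinates indexed by `Fin (n+3)`, distinguished second-to-last
index `p = ⟨n+1⟩`) and a weight `ω ∈ ℝⁿ_{>0}` with `ωᵢ > aᵢω₁` for `i ∉ {1, n-1}` and
`a_{n-1}ω₁ > ω_{n-1}`, the initial ideal `in_ω(I_A)` equals
`⟨∂₂,…,∂_{n-2}, ∂₁^{a_{n-1}}, ∂ₙ⟩`. -/
theorem stmt14 (n : ℕ) (a : Fin (n + 3) → ℕ) (h0 : a 0 = 1) (hmono : StrictMono a)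
    (ω : Fin (n + 3) → ℝ) (hpos : ∀ i, 0 < ω i)
    (hω1 : ∀ i : Fin (n + 3), i ≠ 0 → i ≠ ⟨n + 1, by omega⟩ → (a i : ℝ) * ω 0 < ω i)
    (hω2 : ω ⟨n + 1, by omega⟩ < (a ⟨n + 1, by omega⟩ : ℝ) * ω 0) :
    Ideal.span {g : MvPolynomial (Fin (n + 3)) ℂ |
        ∃ f ∈ Ideal.span {f : MvPolynomial (Fin (n + 3)) ℂ | ∃ u : Fin (n + 3) → ℤ,
            (∑ i, (a i : ℤ) * u i = 0) ∧
            f = (∏ i, X i ^ (u i).toNat) - ∏ i, X i ^ (-u i).toNat},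
          f ≠ 0 ∧ g = inw ω f} =
      Ideal.span ({X 0 ^ a ⟨n + 1, by omega⟩} ∪
        {g : MvPolynomial (Fin (n + 3)) ℂ |
          ∃ i : Fin (n + 3), i ≠ 0 ∧ i ≠ ⟨n + 1, by omega⟩ ∧ g = X i}) := by
  have hp : (0 : Fin (n+3)) ≠ ⟨n + 1, by omega⟩ := by
    intro h
    have := congrArg Fin.val h
    simp at this
  set p : Fin (n+3) := ⟨n + 1, by omega⟩ with hpdef
  apply le_antisymm
  · rw [Ideal.span_le]
    rintro g ⟨f, hf, -, rfl⟩
    show inw ω f ∈ _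
    unfold inw
    rw [SetLike.mem_coe]
    apply Ideal.sum_mem
    intro γ hγ
    rw [Finset.mem_filter] at hγ
    rcases max_support a h0 ω p hp (hpos 0) hω1 hω2 hf hγ.1 hγ.2 with h | ⟨i, hi0, hip, hin⟩
    · have hdvd : (X 0 : MvPolynomial (Fin (n+3)) ℂ) ^ a p ∣ monomial γ (coeff γ f) := by
        rw [X_pow_eq_monomial, monomial_dvd_monomial]
        exact ⟨Or.inr (Finsupp.single_le_iff.mpr h), one_dvd _⟩
      obtain ⟨q, hq⟩ := hdvd
      rw [hq]
      exact Ideal.mul_mem_right _ _ (Ideal.subset_span (Set.mem_union_left _ rfl))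
    · have hdvd : (X i : MvPolynomial (Fin (n+3)) ℂ) ∣ monomial γ (coeff γ f) :=
        X_dvd_monomial.mpr (Or.inr hin)
      obtain ⟨q, hq⟩ := hdvd
      rw [hq]
      exact Ideal.mul_mem_right _ _
        (Ideal.subset_span (Set.mem_union_right _ ⟨i, hi0, hip, rfl⟩))
  · rw [Ideal.span_le]
    rintro g hg
    rw [SetLike.mem_coe]
    rcases hg with hg | ⟨i, hi0, hip, rfl⟩
    · rw [Set.mem_singleton_iff] at hg
      subst hg
      set u : Fin (n+3) → ℤ := fun k => if k = 0 then (a p : ℤ) else if k = p then -1 else 0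
        with hu
      have hsum : ∑ k, (a k : ℤ) * u k = 0 := by
        rw [sum_eq_pair (fun k => (a k : ℤ) * u k) 0 p hp
          (fun k hk1 hk2 => by show (a k : ℤ) * u k = 0; simp [hu, hk1, hk2])]
        simp [hu, Ne.symm hp, h0]
      set s : Fin (n+3) →₀ ℕ := Finsupp.single 0 (a p) with hs
      set t : Fin (n+3) →₀ ℕ := Finsupp.single p 1 with ht
      have hst : s ≠ t := by
        intro h
        have h2 := congrArg (fun g => g p) h
        rw [hs, ht] at h2
        simp only [Finsupp.single_eq_of_ne' hp, Finsupp.single_eq_same] at h2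
        exact one_ne_zero h2.symm
      have hf1 : (∏ k, (X k : MvPolynomial (Fin (n+3)) ℂ) ^ (u k).toNat) = monomial s 1 := by
        rw [Finset.prod_eq_single 0]
        · simp [hu, hs, X_pow_eq_monomial]
        · intro b _ hb
          have hz : (u b).toNat = 0 := by by_cases hbp : b = p <;> simp [hu, hb, hbp, Ne.symm hp]
          rw [hz, pow_zero]
        · intro habs; exact absurd (Finset.mem_univ 0) habs
      have hf2 : (∏ k, (X k : MvPolynomial (Fin (n+3)) ℂ) ^ (-u k).toNat) = monomial t 1 := by
        rw [Finset.prod_eq_single p]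
        · have h1 : (-u p).toNat = 1 := by simp [hu, Ne.symm hp]
          rw [h1, pow_one, ht, ← pow_one (X p : MvPolynomial (Fin (n+3)) ℂ),
            X_pow_eq_monomial]
        · intro b _ hb
          have hz : (-u b).toNat = 0 := by
            by_cases hb0 : b = 0
            · subst hb0; simp [hu]
            · simp [hu, hb0, hb]
          rw [hz, pow_zero]
        · intro habs; exact absurd (Finset.mem_univ p) habs
      have hfeq : (∏ k, (X k : MvPolynomial (Fin (n+3)) ℂ) ^ (u k).toNat)
          - ∏ k, (X k : MvPolynomial (Fin (n+3)) ℂ) ^ (-u k).toNat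
          = monomial s 1 + monomial t (-1) := by
        rw [hf1, hf2, sub_eq_add_neg]
        congr 1
        rw [← map_neg]
      have hwlt : wdeg ω t < wdeg ω s := by
        rw [hs, ht, wdeg_single, wdeg_single]
        push_cast
        rw [mul_one]
        nlinarith [hω2]
      refine Ideal.subset_span ⟨monomial s 1 + monomial t (-1),
        Ideal.subset_span ⟨u, hsum, hfeq.symm⟩,
        binomial_ne_zero hst (by norm_num), ?_⟩
      rw [inw_binomial ω hst hwlt one_ne_zero (by norm_num), X_pow_eq_monomial]
    · set u : Fin (n+3) → ℤ := fun k => if k = 0 then (a i : ℤ) else if k = i then -1 else 0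
        with hu
      have hi0' : (0 : Fin (n+3)) ≠ i := Ne.symm hi0
      have hsum : ∑ k, (a k : ℤ) * u k = 0 := by
        rw [sum_eq_pair (fun k => (a k : ℤ) * u k) 0 i hi0'
          (fun k hk1 hk2 => by show (a k : ℤ) * u k = 0; simp [hu, hk1, hk2])]
        simp [hu, hi0, h0]
      set s : Fin (n+3) →₀ ℕ := Finsupp.single 0 (a i) with hs
      set t : Fin (n+3) →₀ ℕ := Finsupp.single i 1 with ht
      have hst : t ≠ s := by
        intro h
        have h2 := congrArg (fun g => g i) h
        rw [hs, ht] at h2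
        simp only [Finsupp.single_eq_of_ne' hi0', Finsupp.single_eq_same] at h2
        exact one_ne_zero h2
      have hf1 : (∏ k, (X k : MvPolynomial (Fin (n+3)) ℂ) ^ (u k).toNat) = monomial s 1 := by
        rw [Finset.prod_eq_single 0]
        · simp [hu, hs, X_pow_eq_monomial]
        · intro b _ hb
          have hz : (u b).toNat = 0 := by by_cases hbp : b = i <;> simp [hu, hb, hbp, hi0]
          rw [hz, pow_zero]
        · intro habs; exact absurd (Finset.mem_univ 0) habs
      have hf2 : (∏ k, (X k : MvPolynomial (Fin (n+3)) ℂ) ^ (-u k).toNat) = monomial t 1 := by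
        rw [Finset.prod_eq_single i]
        · have h1 : (-u i).toNat = 1 := by simp [hu, hi0]
          rw [h1, pow_one, ht, ← pow_one (X i : MvPolynomial (Fin (n+3)) ℂ),
            X_pow_eq_monomial]
        · intro b _ hb
          have hz : (-u b).toNat = 0 := by
            by_cases hb0 : b = 0
            · subst hb0; simp [hu]
            · simp [hu, hb0, hb]
          rw [hz, pow_zero]
        · intro habs; exact absurd (Finset.mem_univ i) habs
      have hfeq : (∏ k, (X k : MvPolynomial (Fin (n+3)) ℂ) ^ (u k).toNat)
          - ∏ k, (X k : MvPolynomial (Fin (n+3)) ℂ) ^ (-u k).toNat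
          = monomial t (-1) + monomial s 1 := by
        rw [hf1, hf2, sub_eq_add_neg, ← map_neg]
        exact add_comm _ _
      have hwlt : wdeg ω s < wdeg ω t := by
        rw [hs, ht, wdeg_single, wdeg_single]
        push_cast
        rw [mul_one]
        nlinarith [hω1 i hi0 hip]
      have hmem : inw ω (monomial t (-1) + monomial s 1) ∈
          Ideal.span {g : MvPolynomial (Fin (n + 3)) ℂ |
            ∃ f ∈ Ideal.span {f : MvPolynomial (Fin (n + 3)) ℂ | ∃ u : Fin (n + 3) → ℤ,
                (∑ i, (a i : ℤ) * u i = 0) ∧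
                f = (∏ i, X i ^ (u i).toNat) - ∏ i, X i ^ (-u i).toNat},
              f ≠ 0 ∧ g = inw ω f} :=
        Ideal.subset_span ⟨monomial t (-1) + monomial s 1,
          Ideal.subset_span ⟨u, hsum, hfeq.symm⟩,
          binomial_ne_zero hst one_ne_zero, rfl⟩
      have hXi : (X i : MvPolynomial (Fin (n+3)) ℂ)
          = -(inw ω (monomial t (-1) + monomial s 1)) := by
        rw [inw_binomial ω hst hwlt (by norm_num) one_ne_zero]
        rw [← map_neg, neg_neg, ← pow_one (X i : MvPolynomial (Fin (n+3)) ℂ),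
          X_pow_eq_monomial, ht]
      rw [hXi]
      exact neg_mem hmem
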